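/- arXiv:math/0005170 — 5 statements merged into one kernel-verified Lean document; each statement's English description precedes it below -/
import Mathlib

section
/- Let φ : 𝒜 → ℬ be a bijection between standard operator algebras on complex Banach spaces satisfying φ(ABA) = φ(A)φ(B)φ(A). Then for every n ∈ ℕ and every tripotent P ∈ 𝒜, rank P = n if and only if rank φ(P) = n. -/
/-!
Tripotency and the relation `a ≼ b :⟺ a ∈ b𝒜b` are defined through the triple product `aba`
alone, so a bijection preserving that product preserves everything built from them. For a
tripotent `P` of a standard operator algebra, `rank P ≥ n` holds iff there is a chain
`0 = v₀ ≺ v₁ ≺ ⋯ ≺ vₙ ≼ P` of tripotents. Finite-rank idempotents below `P` of every rank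
`m ≤ rank P` give such chains. Conversely `v ≼ w` implies `rank v ≤ rank w`, and if the
tripotents `v ≼ w` have the same finite rank then `range v = range w`, hence `v v w = w`, which
already forces `w ≼ v`: every strict step of a chain raises the rank.
-/

/-- A standard operator algebra on a complex Banach space: a subalgebra of the
bounded operators containing all finite-rank operators. -/
def IsStandardOpAlg {X : Type*} [NormedAddCommGroup X] [NormedSpace ℂ X]
    (S : Subalgebra ℂ (X →L[ℂ] X)) : Prop :=
  ∀ T : X →L[ℂ] X, FiniteDimensional ℂ (LinearMap.range (T : X →ₗ[ℂ] X)) → T ∈ S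

open Function Cardinal

section Sandwich

variable {M N : Type*}

def IsTripotent [Mul M] (a : M) : Prop := a * a * a = a

def SandwichLE [Mul M] (a b : M) : Prop := ∃ c, a = b * c * b

def SandwichLT [Mul M] (a b : M) : Prop := SandwichLE a b ∧ ¬ SandwichLE b a

/-- `IsChainTop n q`: there is a chain `0 = v₀ ≺ v₁ ≺ ⋯ ≺ vₙ = q` of tripotents, where `≺` is
`SandwichLT`; its first step `0 ≺ v₁` just says `v₁ ≠ 0`. -/
def IsChainTop [MulZeroClass M] : ℕ → M → Prop
  | 0, q => q = 0
  | n + 1, q => IsTripotent q ∧ ∃ r, SandwichLT r q ∧ IsChainTop n r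

def HasChainBelow [MulZeroClass M] (n : ℕ) (p : M) : Prop := ∃ q, SandwichLE q p ∧ IsChainTop n q

theorem IsTripotent.zero [MulZeroClass M] : IsTripotent (0 : M) := by
  simp [IsTripotent]

theorem IsIdempotentElem.isTripotent [Mul M] {e : M} (he : IsIdempotentElem e) :
    IsTripotent e := by
  rw [IsTripotent, he.eq, he.eq]

theorem IsChainTop.isTripotent [MulZeroClass M] :
    ∀ {n : ℕ} {q : M}, IsChainTop n q → IsTripotent q
  | 0, _, rfl => .zero
  | _ + 1, _, h => h.1

theorem sandwichLE_zero [MulZeroClass M] (b : M) : SandwichLE 0 b :=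
  ⟨0, by simp⟩

theorem IsTripotent.map [Mul M] [Mul N] {F : Type*} [FunLike F M N] [MulHomClass F M N] (f : F)
    {a : M} (ha : IsTripotent a) : IsTripotent (f a) := by
  rw [IsTripotent, ← map_mul, ← map_mul, ha]

theorem SandwichLE.map [Mul M] [Mul N] {F : Type*} [FunLike F M N] [MulHomClass F M N] (f : F)
    {a b : M} (h : SandwichLE a b) : SandwichLE (f a) (f b) := by
  obtain ⟨c, rfl⟩ := h
  exact ⟨f c, by simp only [map_mul]⟩

theorem sandwichLE_of_mul_eq [Semigroup M] {e a : M} (hl : a * a * e = e) (hr : e * (a * a) = e) :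
    SandwichLE e a :=
  ⟨a * e * a, by simp only [← mul_assoc, hl]; rw [mul_assoc, hr]⟩

theorem SandwichLE.sandwichLE_of_mul_mul_eq [Semigroup M] {u w : M} (huw : SandwichLE u w)
    (hw : IsTripotent w) (h : u * u * w = w) : SandwichLE w u := by
  obtain ⟨c, rfl⟩ := huw
  set u := w * c * w
  have hu : u * w * w = u := by
    simp only [u, mul_assoc]; rw [← mul_assoc w w w, hw]
  have huu : u * u = w * w :=
    calc u * u = u * (u * w * w) := by rw [hu]
      _ = u * u * w * w := by simp only [mul_assoc]
      _ = w * w := by rw [h]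
  refine ⟨u * w * u, ?_⟩
  calc w = w * w * w := hw.symm
    _ = u * u * w * (u * u) := by rw [h, huu, mul_assoc]
    _ = u * (u * w * u) * u := by simp only [mul_assoc]

section Transfer

variable [MulZeroClass M] [MulZeroClass N] {f : M → N}

theorem map_zero_of_surjective_of_map_mul_mul (hf : Surjective f)
    (hmul : ∀ a b, f (a * b * a) = f a * f b * f a) : f 0 = 0 := by
  obtain ⟨z, hz⟩ := hf 0
  simpa [hz] using hmul 0 z

theorem isTripotent_map_iff (hf : Injective f) (hmul : ∀ a b, f (a * b * a) = f a * f b * f a)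
    {a : M} : IsTripotent (f a) ↔ IsTripotent a := by
  rw [IsTripotent, IsTripotent, ← hmul, hf.eq_iff]

theorem sandwichLE_map_iff (hf : Bijective f) (hmul : ∀ a b, f (a * b * a) = f a * f b * f a)
    {a b : M} : SandwichLE (f a) (f b) ↔ SandwichLE a b := by
  simp only [SandwichLE, hf.2.exists, ← hmul, hf.1.eq_iff]

theorem sandwichLT_map_iff (hf : Bijective f) (hmul : ∀ a b, f (a * b * a) = f a * f b * f a)
    {a b : M} : SandwichLT (f a) (f b) ↔ SandwichLT a b := by
  simp only [SandwichLT, sandwichLE_map_iff hf hmul]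

theorem isChainTop_map_iff (hf : Bijective f) (hmul : ∀ a b, f (a * b * a) = f a * f b * f a) :
    ∀ {n : ℕ} {q : M}, IsChainTop n (f q) ↔ IsChainTop n q
  | 0, q => by
    rw [IsChainTop, IsChainTop, ← map_zero_of_surjective_of_map_mul_mul hf.2 hmul, hf.1.eq_iff]
  | n + 1, q => by
    simp only [IsChainTop, isTripotent_map_iff hf.1 hmul, hf.2.exists, sandwichLT_map_iff hf hmul,
      isChainTop_map_iff hf hmul]

theorem hasChainBelow_map_iff (hf : Bijective f) (hmul : ∀ a b, f (a * b * a) = f a * f b * f a)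
    {n : ℕ} {p : M} : HasChainBelow n (f p) ↔ HasChainBelow n p := by
  simp only [HasChainBelow, hf.2.exists, sandwichLE_map_iff hf hmul, isChainTop_map_iff hf hmul]

end Transfer

end Sandwich

section LinearAlgebra

open LinearMap

theorem IsTripotent.apply_apply_of_mem_range {R V : Type*} [Semiring R] [AddCommMonoid V]
    [Module R V] {u : Module.End R V} (hu : IsTripotent u) {y : V} (hy : y ∈ range u) :
    u (u y) = y := by
  obtain ⟨x, rfl⟩ := hy
  exact LinearMap.congr_fun hu x

variable {K V : Type*} [DivisionRing K] [AddCommGroup V] [Module K V]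

theorem SandwichLE.range_le {u w : Module.End K V} (h : SandwichLE u w) : range u ≤ range w := by
  obtain ⟨c, rfl⟩ := h
  rintro _ ⟨x, rfl⟩
  exact ⟨c (w x), rfl⟩

theorem SandwichLE.rank_le {u w : Module.End K V} (h : SandwichLE u w) : u.rank ≤ w.rank :=
  Submodule.rank_mono h.range_le

theorem SandwichLE.mul_mul_eq_of_rank_eq {u w : Module.End K V} (h : SandwichLE u w)
    (hu : IsTripotent u) (hfin : w.rank < ℵ₀) (hrank : u.rank = w.rank) : u * u * w = w := by
  have : FiniteDimensional K (range w) := Module.rank_lt_aleph0_iff.mp hfin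
  have hrange : range u = range w :=
    Submodule.eq_of_le_of_finrank_eq h.range_le (congrArg Cardinal.toNat hrank)
  ext x
  exact hu.apply_apply_of_mem_range (hrange ▸ mem_range_self w x)

theorem IsChainTop.natCast_le_rank {R : Type*} [Semiring R] (ρ : R →+* Module.End K V)
    (hρ : Injective ρ) : ∀ {n : ℕ} {q : R}, IsChainTop n q → (n : Cardinal) ≤ (ρ q).rank
  | 0, _, _ => by simp
  | n + 1, q, ⟨hq, r, ⟨hrq, hqr⟩, hr⟩ => by
    have hn : (n : Cardinal) ≤ (ρ r).rank := hr.natCast_le_rank ρ hρ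
    have hle : (ρ r).rank ≤ (ρ q).rank := (hrq.map ρ).rank_le
    rcases lt_or_ge (ρ q).rank ℵ₀ with hfin | hinf
    · have hne : (ρ r).rank ≠ (ρ q).rank := fun heq =>
        hqr <| hrq.sandwichLE_of_mul_mul_eq hq <| hρ <| by
          simpa using (hrq.map ρ).mul_mul_eq_of_rank_eq (hr.isTripotent.map ρ) hfin heq
      push_cast
      exact natCast_add_one_le_iff.mpr (hn.trans_lt (hle.lt_of_ne hne))
    · exact natCast_lt_aleph0.le.trans hinf

end LinearAlgebra

section Operators

open LinearMap

variable {𝕜 X : Type*} [RCLike 𝕜] [NormedAddCommGroup X] [NormedSpace 𝕜 X]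

/-- Inside the range of a tripotent `T` choose an `m`-dimensional subspace `S`, a continuous
projection `p` onto `S`, and set `E = p ∘ T²`. -/
theorem exists_idempotent_rank_eq_of_le_rank {T : X →L[𝕜] X} (hT : IsTripotent T) {m : ℕ}
    (hm : (m : Cardinal) ≤ (T : X →ₗ[𝕜] X).rank) :
    ∃ E : X →L[𝕜] X, IsIdempotentElem E ∧ T * T * E = E ∧ E * (T * T) = E ∧
      (E : X →ₗ[𝕜] X).rank = m := by
  have hT' : IsTripotent (T : X →ₗ[𝕜] X) := hT.map ContinuousLinearMap.toLinearMapRingHom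
  obtain ⟨s, hcard, hli⟩ := LinearMap.le_rank_iff_exists_linearIndependent_finset.mp hm
  set S := Submodule.span 𝕜 (Set.range fun x : s => T x)
  have hST : S ≤ range (T : X →ₗ[𝕜] X) :=
    Submodule.span_le.mpr <| Set.range_subset_iff.mpr fun x => mem_range_self _ _
  have : FiniteDimensional 𝕜 S := FiniteDimensional.span_of_finite 𝕜 (Set.finite_range _)
  obtain ⟨p, hp⟩ := Submodule.ClosedComplemented.of_finiteDimensional S
  set E : X →L[𝕜] X := S.subtypeL ∘L p ∘L (T * T)
  have hES : ∀ y ∈ S, E y = y := fun y hy => by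
    have hTTy : T (T y) = y := hT'.apply_apply_of_mem_range (hST hy)
    change (p (T (T y)) : X) = y
    rw [hTTy, hp ⟨y, hy⟩]
  have hrange : range (E : X →ₗ[𝕜] X) = S := by
    refine le_antisymm ?_ fun y hy => ⟨y, hES y hy⟩
    rintro _ ⟨x, rfl⟩
    exact (p _).2
  refine ⟨E, ?_, ?_, ?_, ?_⟩
  · ext x
    exact hES _ (hrange ▸ mem_range_self _ x)
  · ext x
    exact hT'.apply_apply_of_mem_range (hST (hrange ▸ mem_range_self _ x))
  · ext x
    change (p (T (T (T (T x)))) : X) = p (T (T x))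
    rw [show T (T (T (T x))) = T (T x) from DFunLike.congr_fun hT (T x)]
  · rw [LinearMap.rank, hrange, ← Module.finrank_eq_rank]
    exact_mod_cast (finrank_span_eq_card hli).trans (by simp [hcard])

end Operators

section StandardOperatorAlgebra

variable {X : Type*} [NormedAddCommGroup X] [NormedSpace ℂ X] {𝒜 : Subalgebra ℂ (X →L[ℂ] X)}

def Subalgebra.toModuleEnd (𝒜 : Subalgebra ℂ (X →L[ℂ] X)) : 𝒜 →+* Module.End ℂ X :=
  ContinuousLinearMap.toLinearMapRingHom.comp 𝒜.val.toRingHom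

theorem Subalgebra.toModuleEnd_injective : Injective 𝒜.toModuleEnd :=
  ContinuousLinearMap.coe_injective.comp Subtype.val_injective

theorem exists_tripotent_sandwichLE_rank_eq (h𝒜 : IsStandardOpAlg 𝒜) {P : 𝒜}
    (hP : IsTripotent P) {m : ℕ} (hm : (m : Cardinal) ≤ (𝒜.toModuleEnd P).rank) :
    ∃ E : 𝒜, IsTripotent E ∧ SandwichLE E P ∧ (𝒜.toModuleEnd E).rank = m := by
  obtain ⟨E, hE, hPE, hEP, hrank⟩ := exists_idempotent_rank_eq_of_le_rank (hP.map 𝒜.val) hm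
  have hE𝒜 : E ∈ 𝒜 := h𝒜 E (Module.rank_lt_aleph0_iff.mp (hrank.trans_lt natCast_lt_aleph0))
  have hE' : IsIdempotentElem (⟨E, hE𝒜⟩ : 𝒜) := Subtype.ext hE
  exact ⟨⟨E, hE𝒜⟩, hE'.isTripotent, sandwichLE_of_mul_eq (Subtype.ext hPE) (Subtype.ext hEP),
    hrank⟩

theorem exists_isChainTop_sandwichLE_rank_le (h𝒜 : IsStandardOpAlg 𝒜) :
    ∀ {n : ℕ} {P : 𝒜}, IsTripotent P → (n : Cardinal) ≤ (𝒜.toModuleEnd P).rank →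
      ∃ q, SandwichLE q P ∧ IsChainTop n q ∧ (𝒜.toModuleEnd q).rank ≤ n
  | 0, P, _, _ => ⟨0, sandwichLE_zero P, rfl, by simp⟩
  | n + 1, P, hP, hn => by
    obtain ⟨E, hE, hEP, hrank⟩ := exists_tripotent_sandwichLE_rank_eq h𝒜 hP hn
    obtain ⟨r, hrE, hr, hrn⟩ := exists_isChainTop_sandwichLE_rank_le (n := n) h𝒜 hE
      (by rw [hrank]; exact_mod_cast n.le_succ)
    refine ⟨E, hEP, ⟨hE, r, ⟨hrE, fun hEr => ?_⟩, hr⟩, hrank.le⟩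
    have := (hEr.map 𝒜.toModuleEnd).rank_le.trans hrn
    rw [hrank, Nat.cast_le] at this
    omega

theorem natCast_le_rank_iff_hasChainBelow (h𝒜 : IsStandardOpAlg 𝒜) {P : 𝒜} (hP : IsTripotent P)
    (n : ℕ) : (n : Cardinal) ≤ (𝒜.toModuleEnd P).rank ↔ HasChainBelow n P := by
  refine ⟨fun hn => ?_, fun ⟨q, hqP, hq⟩ => ?_⟩
  · obtain ⟨q, hqP, hq, -⟩ := exists_isChainTop_sandwichLE_rank_le h𝒜 hP hn
    exact ⟨q, hqP, hq⟩
  · exact (hq.natCast_le_rank _ Subalgebra.toModuleEnd_injective).trans (hqP.map _).rank_le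

theorem rank_eq_natCast_iff_hasChainBelow (h𝒜 : IsStandardOpAlg 𝒜) {P : 𝒜} (hP : IsTripotent P)
    (n : ℕ) : (𝒜.toModuleEnd P).rank = n ↔ HasChainBelow n P ∧ ¬ HasChainBelow (n + 1) P := by
  rw [← natCast_le_rank_iff_hasChainBelow h𝒜 hP, ← natCast_le_rank_iff_hasChainBelow h𝒜 hP,
    not_le, Nat.cast_succ, lt_natCast_add_one_iff, le_antisymm_iff, and_comm]

end StandardOperatorAlgebra

theorem stmt4_general {X Y : Type*} [NormedAddCommGroup X] [NormedSpace ℂ X]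
    [NormedAddCommGroup Y] [NormedSpace ℂ Y]
    (𝒜 : Subalgebra ℂ (X →L[ℂ] X)) (ℬ : Subalgebra ℂ (Y →L[ℂ] Y))
    (h𝒜 : IsStandardOpAlg 𝒜) (hℬ : IsStandardOpAlg ℬ)
    (φ : 𝒜 → ℬ) (hbij : Function.Bijective φ)
    (hmul : ∀ A B : 𝒜, φ (A * B * A) = φ A * φ B * φ A) :
    ∀ (n : ℕ) (P : 𝒜), P ^ 3 = P →
      (Module.rank ℂ (LinearMap.range ((P : X →L[ℂ] X) : X →ₗ[ℂ] X)) = n ↔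
       Module.rank ℂ (LinearMap.range ((φ P : Y →L[ℂ] Y) : Y →ₗ[ℂ] Y)) = n) := by
  intro n P hP
  have hP3 : IsTripotent P := (pow_three' P).symm.trans hP
  have hφP3 : IsTripotent (φ P) := (isTripotent_map_iff hbij.1 hmul).mpr hP3
  refine (rank_eq_natCast_iff_hasChainBelow h𝒜 hP3 n).trans
    ((rank_eq_natCast_iff_hasChainBelow hℬ hφP3 n).trans ?_).symm
  simp only [hasChainBelow_map_iff hbij hmul]

theorem stmt4 {X Y : Type*} [NormedAddCommGroup X] [NormedSpace ℂ X] [CompleteSpace X]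
    [NormedAddCommGroup Y] [NormedSpace ℂ Y] [CompleteSpace Y]
    (𝒜 : Subalgebra ℂ (X →L[ℂ] X)) (ℬ : Subalgebra ℂ (Y →L[ℂ] Y))
    (h𝒜 : IsStandardOpAlg 𝒜) (hℬ : IsStandardOpAlg ℬ)
    (φ : 𝒜 → ℬ) (hbij : Function.Bijective φ)
    (hmul : ∀ A B : 𝒜, φ (A * B * A) = φ A * φ B * φ A) :
    ∀ (n : ℕ) (P : 𝒜), P ^ 3 = P →
      (Module.rank ℂ (LinearMap.range ((P : X →L[ℂ] X) : X →ₗ[ℂ] X)) = n ↔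
       Module.rank ℂ (LinearMap.range ((φ P : Y →L[ℂ] Y) : Y →ₗ[ℂ] Y)) = n) :=
  stmt4_general 𝒜 ℬ h𝒜 hℬ φ hbij hmul
end

section
/- There do not exist four nonzero rank-one tripotents Q₁, Q₂, Q₃, Q₄ in M₂(ℂ) such that QᵢQⱼQᵢ = 0 for all i ≠ j. -/
set_option synthInstance.maxHeartbeats 1000000
set_option maxHeartbeats 1000000

open Matrix

private lemma det_zero_of_rank_one {Q : Matrix (Fin 2) (Fin 2) ℂ} (h : Q.rank = 1) :
    Q.det = 0 := by
  by_contra hd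
  have hu : IsUnit Q := (Matrix.isUnit_iff_isUnit_det Q).2 (Ne.isUnit hd)
  have := Matrix.rank_of_isUnit Q hu
  rw [h] at this; simp at this

private lemma sandwich {Q X : Matrix (Fin 2) (Fin 2) ℂ} (h : Q.det = 0) :
    Q * X * Q = (Q * X).trace • Q := by
  rw [Matrix.det_fin_two] at h
  ext i j
  fin_cases i <;> fin_cases j <;>
    simp [Matrix.mul_apply, Matrix.trace, Matrix.diag, Fin.sum_univ_two]
  · linear_combination (-(X 1 1)) * h
  · linear_combination (X 0 1) * h
  · linear_combination (X 1 0) * h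
  · linear_combination (-(X 0 0)) * h

theorem stmt6 :
    ¬ ∃ Q : Fin 4 → Matrix (Fin 2) (Fin 2) ℂ,
        (∀ i, Q i ≠ 0 ∧ (Q i) ^ 3 = Q i ∧ (Q i).rank = 1) ∧
        (∀ i j, i ≠ j → Q i * Q j * Q i = 0) := by
  rintro ⟨Q, hQ, horth⟩
  have hdet : ∀ i, (Q i).det = 0 := fun i => det_zero_of_rank_one (hQ i).2.2
  have hsq : ∀ i, Q i * Q i = (Q i).trace • Q i := fun i => by
    have := sandwich (X := (1 : Matrix (Fin 2) (Fin 2) ℂ)) (hdet i)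
    simpa using this
  have htr2 : ∀ i, (Q i).trace ^ 2 = 1 := by
    intro i
    have h3 : (Q i) ^ 3 = ((Q i).trace ^ 2) • Q i := by
      rw [pow_succ, pow_two, hsq i, Matrix.smul_mul, hsq i, smul_smul, pow_two]
    rw [(hQ i).2.1] at h3
    by_contra hc
    have : ((Q i).trace ^ 2 - 1) • Q i = 0 := by
      rw [sub_smul, one_smul, ← h3, sub_self]
    rcases smul_eq_zero.mp this with h | h
    · exact hc (by linear_combination h)
    · exact (hQ i).1 h
  have htr0 : ∀ i j, i ≠ j → (Q i * Q j).trace = 0 := by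
    intro i j hij
    have h1 := sandwich (X := Q j) (hdet i)
    rw [horth i j hij] at h1
    rcases smul_eq_zero.mp h1.symm with h | h
    · exact h
    · exact absurd h (hQ i).1
  -- the five matrices Q0..Q3, 1 are linearly independent
  set R : Fin 5 → Matrix (Fin 2) (Fin 2) ℂ := ![Q 0, Q 1, Q 2, Q 3, 1] with hR
  have hli : LinearIndependent ℂ R := by
    rw [Fintype.linearIndependent_iff]
    intro g hg
    have key : ∀ j : Fin 5, ∑ i, g i * (R i * R j).trace = 0 := by
      intro j
      have := congrArg (fun M => (M * R j).trace) hg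
      simpa [Finset.sum_mul, Matrix.smul_mul, Matrix.trace_sum, Matrix.trace_smul,
        smul_eq_mul] using this
    have tQQ : ∀ i, (Q i * Q i).trace = 1 := by
      intro i
      rw [hsq i, Matrix.trace_smul, smul_eq_mul, ← pow_two, htr2 i]
    have e0 := key 0
    have e1 := key 1
    have e2 := key 2
    have e3 := key 3
    have e4 := key 4
    simp only [hR, Fin.sum_univ_five, Matrix.cons_val_zero, Matrix.cons_val_one,
      Matrix.head_cons, Matrix.cons_val_two, Matrix.cons_val_three, Matrix.cons_val_four,
      Matrix.tail_cons, Matrix.cons_val_succ, Matrix.one_mul, Matrix.mul_one] at e0 e1 e2 e3 e4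
    rw [tQQ 0, htr0 1 0 (by decide), htr0 2 0 (by decide), htr0 3 0 (by decide)] at e0
    rw [htr0 0 1 (by decide), tQQ 1, htr0 2 1 (by decide), htr0 3 1 (by decide)] at e1
    rw [htr0 0 2 (by decide), htr0 1 2 (by decide), tQQ 2, htr0 3 2 (by decide)] at e2
    rw [htr0 0 3 (by decide), htr0 1 3 (by decide), htr0 2 3 (by decide), tQQ 3] at e3
    rw [Matrix.trace_one] at e4
    norm_num at e4
    simp only [mul_zero, mul_one, add_zero, zero_add] at e0 e1 e2 e3 e4
    -- e_j : g j + g 4 * tr(Q j) = 0 ; e4 : ∑ g i * tr(Q i) + g 4 * 2 = 0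
    have h4 : g 4 = 0 := by
      have t0 := htr2 0; have t1 := htr2 1; have t2 := htr2 2; have t3 := htr2 3
      linear_combination ((Q 0).trace * e0 + (Q 1).trace * e1 + (Q 2).trace * e2 +
        (Q 3).trace * e3 - e4 - g 4 * t0 - g 4 * t1 - g 4 * t2 - g 4 * t3) / 2
    intro i
    fin_cases i
    · show g 0 = 0; linear_combination e0 - (Q 0).trace * h4
    · show g 1 = 0; linear_combination e1 - (Q 1).trace * h4
    · show g 2 = 0; linear_combination e2 - (Q 2).trace * h4
    · show g 3 = 0; linear_combination e3 - (Q 3).trace * h4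
    · exact h4
  have hcard := hli.fintype_card_le_finrank
  rw [Module.finrank_matrix] at hcard
  simp at hcard
end

section
/- There do not exist five rank-one tripotents P₁, …, P₅ in M₂(ℂ) ⊕ M₁(ℂ) (as a subalgebra of M₃(ℂ) of block-diagonal matrices) with PᵢPⱼPᵢ = 0 for all i ≠ j. -/
set_option synthInstance.maxHeartbeats 1000000
set_option maxHeartbeats 1000000

/-- A 3×3 matrix is block-diagonal with a 2×2 block and a 1×1 block. -/
def IsBlockDiag21 (M : Matrix (Fin 3) (Fin 3) ℂ) : Prop :=
  M 0 2 = 0 ∧ M 1 2 = 0 ∧ M 2 0 = 0 ∧ M 2 1 = 0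

namespace Stmt7Aux

noncomputable section

def dot (w x : Fin 2 → ℂ) : ℂ := w 0 * x 0 + w 1 * x 1

def cross (x y : Fin 2 → ℂ) : ℂ := x 0 * y 1 - x 1 * y 0

lemma L1 (w x y : Fin 2 → ℂ) (h1 : dot w x ≠ 0) (h2 : dot w y = 0)
    (h3 : cross x y = 0) : y = 0 := by
  simp only [dot, cross] at h1 h2 h3
  funext a
  have key : ∀ b : Fin 2, y b = 0 := by
    intro b
    have h0 : (w 0 * x 0 + w 1 * x 1) * y 0 = 0 := by linear_combination x 0 * h2 - w 1 * h3
    have h1' : (w 0 * x 0 + w 1 * x 1) * y 1 = 0 := by linear_combination x 1 * h2 + w 0 * h3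
    fin_cases b
    · exact (mul_eq_zero.mp h0).resolve_left h1
    · exact (mul_eq_zero.mp h1').resolve_left h1
  exact key a

lemma L2 (w x y z : Fin 2 → ℂ) (h1 : dot w x = 0) (h2 : dot w y = 0)
    (h3 : dot w z ≠ 0) : cross x y = 0 := by
  simp only [dot] at h1 h2 h3
  by_contra hc
  simp only [cross] at hc
  have hw0 : w 0 = 0 := by
    have : w 0 * (x 0 * y 1 - x 1 * y 0) = 0 := by linear_combination y 1 * h1 - x 1 * h2
    exact (mul_eq_zero.mp this).resolve_right hc
  have hw1 : w 1 = 0 := by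
    have : w 1 * (x 0 * y 1 - x 1 * y 0) = 0 := by linear_combination x 0 * h2 - y 0 * h1
    exact (mul_eq_zero.mp this).resolve_right hc
  exact h3 (by rw [hw0, hw1]; ring)

lemma four_impossible (u v : Fin 4 → Fin 2 → ℂ)
    (hd : ∀ i, dot (v i) (u i) ≠ 0)
    (hp : ∀ i j : Fin 4, i ≠ j → dot (v i) (u j) * dot (v j) (u i) = 0) : False := by
  have OUT : ∀ i j k : Fin 4, j ≠ k → dot (v i) (u j) = 0 → dot (v i) (u k) = 0 → False := by
    intro i j k hjk hij hik
    have hc : cross (u j) (u k) = 0 := L2 (v i) (u j) (u k) (u i) hij hik (hd i)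
    rcases mul_eq_zero.mp (hp j k hjk) with h | h
    · have hz : u k = 0 := L1 (v j) (u j) (u k) (hd j) h hc
      apply hd k
      simp [dot, hz]
    · have hc' : cross (u k) (u j) = 0 := by
        simp only [cross] at hc ⊢; linear_combination -hc
      have hz : u j = 0 := L1 (v k) (u k) (u j) (hd k) h hc'
      apply hd j
      simp [dot, hz]
  have h01 := mul_eq_zero.mp (hp 0 1 (by decide))
  have h02 := mul_eq_zero.mp (hp 0 2 (by decide))
  have h03 := mul_eq_zero.mp (hp 0 3 (by decide))
  have h12 := mul_eq_zero.mp (hp 1 2 (by decide))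
  have h13 := mul_eq_zero.mp (hp 1 3 (by decide))
  have h23 := mul_eq_zero.mp (hp 2 3 (by decide))
  rcases h01 with h | h <;> rcases h02 with h' | h' <;> rcases h03 with h'' | h'' <;>
    rcases h12 with g | g <;> rcases h13 with g' | g' <;> rcases h23 with g'' | g'' <;>
    first
      | exact OUT 0 1 2 (by decide) (by assumption) (by assumption)
      | exact OUT 0 1 3 (by decide) (by assumption) (by assumption)
      | exact OUT 0 2 3 (by decide) (by assumption) (by assumption)
      | exact OUT 1 0 2 (by decide) (by assumption) (by assumption)
      | exact OUT 1 0 3 (by decide) (by assumption) (by assumption)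
      | exact OUT 1 2 3 (by decide) (by assumption) (by assumption)
      | exact OUT 2 0 1 (by decide) (by assumption) (by assumption)
      | exact OUT 2 0 3 (by decide) (by assumption) (by assumption)
      | exact OUT 2 1 3 (by decide) (by assumption) (by assumption)
      | exact OUT 3 0 1 (by decide) (by assumption) (by assumption)
      | exact OUT 3 0 2 (by decide) (by assumption) (by assumption)
      | exact OUT 3 1 2 (by decide) (by assumption) (by assumption)

lemma factor (q : Matrix (Fin 2) (Fin 2) ℂ) (hdet : q.det = 0) :
    ∃ u v : Fin 2 → ℂ, ∀ a b, q a b = u a * v b := by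
  rw [Matrix.det_fin_two] at hdet
  by_cases h00 : q 0 0 ≠ 0
  · refine ⟨![q 0 0, q 1 0], ![1, q 0 1 / q 0 0], ?_⟩
    intro a b
    fin_cases a <;> fin_cases b <;> simp <;> field_simp <;> linear_combination hdet
  · push_neg at h00
    by_cases h01 : q 0 1 ≠ 0
    · have h10 : q 1 0 = 0 := by
        have : q 0 1 * q 1 0 = 0 := by linear_combination -hdet + q 1 1 * h00
        exact (mul_eq_zero.mp this).resolve_left h01
      refine ⟨![q 0 1, q 1 1], ![0, 1], ?_⟩
      intro a b
      fin_cases a <;> fin_cases b <;> simp [h00, h10]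
    · push_neg at h01
      refine ⟨![0, 1], ![q 1 0, q 1 1], ?_⟩
      intro a b
      fin_cases a <;> fin_cases b <;> simp [h00, h01]

def tb (M : Matrix (Fin 3) (Fin 3) ℂ) : Matrix (Fin 2) (Fin 2) ℂ :=
  !![M 0 0, M 0 1; M 1 0, M 1 1]

lemma tb_zero : tb 0 = 0 := by
  ext a b; fin_cases a <;> fin_cases b <;> simp [tb]

lemma bd_mul {M N : Matrix (Fin 3) (Fin 3) ℂ} (hM : IsBlockDiag21 M)
    (hN : IsBlockDiag21 N) : IsBlockDiag21 (M * N) := by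
  obtain ⟨a1, a2, a3, a4⟩ := hM
  obtain ⟨b1, b2, b3, b4⟩ := hN
  refine ⟨?_, ?_, ?_, ?_⟩ <;>
    simp [Matrix.mul_apply, Fin.sum_univ_three, a1, a2, a3, a4, b1, b2, b3, b4]

lemma tb_mul {M N : Matrix (Fin 3) (Fin 3) ℂ} (hM : IsBlockDiag21 M) :
    tb (M * N) = tb M * tb N := by
  obtain ⟨a1, a2, _, _⟩ := hM
  ext a b
  fin_cases a <;> fin_cases b <;>
    simp [tb, Matrix.mul_apply, Fin.sum_univ_three, Fin.sum_univ_two, a1, a2]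

lemma e22 {M N : Matrix (Fin 3) (Fin 3) ℂ} (hM : IsBlockDiag21 M) :
    (M * N) 2 2 = M 2 2 * N 2 2 := by
  obtain ⟨_, _, a3, a4⟩ := hM
  simp [Matrix.mul_apply, Fin.sum_univ_three, a3, a4]

lemma mul2 (M N : Matrix (Fin 2) (Fin 2) ℂ) (a b : Fin 2) :
    (M * N) a b = M a 0 * N 0 b + M a 1 * N 1 b := by
  rw [Matrix.mul_apply, Fin.sum_univ_two]

end

end Stmt7Aux

open Stmt7Aux in
theorem stmt7 :
    ¬ ∃ P : Fin 5 → Matrix (Fin 3) (Fin 3) ℂ,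
        (∀ i, IsBlockDiag21 (P i) ∧ (P i) ^ 3 = P i ∧ (P i).rank = 1) ∧
        (∀ i j, i ≠ j → P i * P j * P i = 0) := by
  rintro ⟨P, hP, hpair⟩
  have hbd : ∀ i, IsBlockDiag21 (P i) := fun i => (hP i).1
  have hcube : ∀ i, P i * P i * P i = P i := by
    intro i
    have h := (hP i).2.1
    rw [pow_succ, pow_succ, pow_one] at h
    exact h
  have hPne : ∀ i, P i ≠ 0 := by
    intro i h0
    have h := (hP i).2.2
    rw [h0, Matrix.rank_zero] at h
    exact zero_ne_one h
  -- at most one index with nonzero (2,2) entry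
  have step2 : ∀ i j, i ≠ j → P i 2 2 = 0 ∨ P j 2 2 = 0 := by
    intro i j hij
    have h := hpair i j hij
    have h22 : P i 2 2 * P j 2 2 * P i 2 2 = 0 := by
      have := congrFun (congrFun h 2) 2
      rwa [e22 (bd_mul (hbd i) (hbd j)), e22 (hbd i), Matrix.zero_apply] at this
    rcases mul_eq_zero.mp h22 with h' | h'
    · rcases mul_eq_zero.mp h' with h'' | h''
      · exact Or.inl h''
      · exact Or.inr h''
    · exact Or.inl h'
  have hk : ∃ k : Fin 5, ∀ i, i ≠ k → P i 2 2 = 0 := by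
    by_cases hall : ∀ i, P i 2 2 = 0
    · exact ⟨0, fun i _ => hall i⟩
    · push_neg at hall
      obtain ⟨k, hkk⟩ := hall
      refine ⟨k, fun i hik => ?_⟩
      rcases step2 i k hik with h | h
      · exact h
      · exact absurd h hkk
  obtain ⟨k, hk⟩ := hk
  set g : Fin 4 → Fin 5 := k.succAbove with hg
  have hginj : Function.Injective g := Fin.succAbove_right_injective
  have hgz : ∀ x : Fin 4, P (g x) 2 2 = 0 := fun x => hk (g x) (Fin.succAbove_ne k x)
  -- top blocks nonzero
  have hQne : ∀ x : Fin 4, tb (P (g x)) ≠ 0 := by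
    intro x h0
    apply hPne (g x)
    have hz : ∀ a b : Fin 2, P (g x) a.castSucc b.castSucc = 0 := by
      intro a b
      have := congrFun (congrFun h0 a) b
      fin_cases a <;> fin_cases b <;> simpa [tb] using this
    ext a b
    rw [Matrix.zero_apply]
    fin_cases a <;> fin_cases b
    · exact hz 0 0
    · exact hz 0 1
    · exact (hbd (g x)).1
    · exact hz 1 0
    · exact hz 1 1
    · exact (hbd (g x)).2.1
    · exact (hbd (g x)).2.2.1
    · exact (hbd (g x)).2.2.2
    · exact hgz x
  have hABex : ∀ x : Fin 4, ∃ a b : Fin 2, tb (P (g x)) a b ≠ 0 := by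
    intro x
    by_contra hcon
    push_neg at hcon
    apply hQne x
    ext a b
    rw [Matrix.zero_apply]
    exact hcon a b
  choose A B hAB using hABex
  -- triple products of top blocks
  have hQQQ : ∀ x y : Fin 4, x ≠ y →
      tb (P (g x)) * tb (P (g y)) * tb (P (g x)) = 0 := by
    intro x y hxy
    have hPP := hpair (g x) (g y) (fun h => hxy (hginj h))
    rw [← tb_mul (hbd (g x)), ← tb_mul (bd_mul (hbd (g x)) (hbd (g y))), hPP, tb_zero]
  -- det of top blocks is zero
  have hdet : ∀ x : Fin 4, (tb (P (g x))).det = 0 := by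
    intro x
    by_contra hd
    have hx1 : x ≠ x + 1 := by fin_cases x <;> decide
    have hABA := hQQQ x (x + 1) hx1
    set Aq := tb (P (g x))
    set Bq := tb (P (g (x + 1)))
    have hu : IsUnit Aq.det := isUnit_iff_ne_zero.mpr hd
    have hB : Bq = 0 := by
      have h2 : Aq⁻¹ * (Aq * Bq * Aq) * Aq⁻¹ = Bq := by
        calc Aq⁻¹ * (Aq * Bq * Aq) * Aq⁻¹
            = (Aq⁻¹ * Aq) * (Bq * (Aq * Aq⁻¹)) := by
              simp only [Matrix.mul_assoc]
          _ = Bq := by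
              rw [Matrix.nonsing_inv_mul Aq hu, Matrix.mul_nonsing_inv Aq hu,
                Matrix.one_mul, Matrix.mul_one]
      rw [hABA] at h2
      rw [← h2]
      simp
    exact hQne (x + 1) hB
  choose u v huv using fun x => factor (tb (P (g x))) (hdet x)
  have hne : ∀ x : Fin 4, u x (A x) * v x (B x) ≠ 0 := by
    intro x
    rw [← huv x (A x) (B x)]
    exact hAB x
  -- tripotency gives dot (v x) (u x) ≠ 0
  have hdotne : ∀ x : Fin 4, dot (v x) (u x) ≠ 0 := by
    intro x hdot
    apply hne x
    have hQ3 : tb (P (g x)) * tb (P (g x)) * tb (P (g x)) = tb (P (g x)) := by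
      rw [← tb_mul (hbd (g x)), ← tb_mul (bd_mul (hbd (g x)) (hbd (g x))), hcube (g x)]
    have h3 := congrFun (congrFun hQ3 (A x)) (B x)
    simp only [mul2, huv x] at h3
    simp only [dot] at hdot
    linear_combination (-1 : ℂ) * h3 +
      ((v x 0 * u x 0 + v x 1 * u x 1) * (u x (A x) * v x (B x))) * hdot
  -- pair condition
  have hp : ∀ x y : Fin 4, x ≠ y → dot (v x) (u y) * dot (v y) (u x) = 0 := by
    intro x y hxy
    have h0 := congrFun (congrFun (hQQQ x y hxy) (A x)) (B x)
    simp only [mul2, huv x, huv y, Matrix.zero_apply] at h0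
    have hfac : u x (A x) * v x (B x) * (dot (v x) (u y) * dot (v y) (u x)) = 0 := by
      simp only [dot]
      linear_combination h0
    rcases mul_eq_zero.mp hfac with h | h
    · exact absurd h (hne x)
    · exact h
  exact four_impossible u v hdotne hp
end

section
/- Let ψ : M₃(ℂ) → M₃(ℂ) be a bijection satisfying ψ(ABA) = ψ(A)ψ(B)ψ(A) and ψ(I) = I. If P, Q are idempotents in M₃(ℂ) with PQ = QP = P, then ψ(P)ψ(Q) = ψ(Q)ψ(P) = ψ(P). Hence ψ preserves the partial order P ≤ Q on idempotents (defined by PQ = QP = P) in both directions. -/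
set_option synthInstance.maxHeartbeats 1000000
set_option maxHeartbeats 1000000

lemma key9 {M : Type*} [Monoid M] {q p : M} (hq : q * q = q) (h : q * p * q = p) :
    p * q = p ∧ q * p = p := by
  constructor
  · calc p * q = q * p * q * q := by rw [h]
    _ = q * p * (q * q) := by rw [mul_assoc]
    _ = q * p * q := by rw [hq]
    _ = p := h
  · calc q * p = q * (q * p * q) := by rw [h]
    _ = (q * q) * p * q := by rw [← mul_assoc, ← mul_assoc]
    _ = q * p * q := by rw [hq]
    _ = p := h

theorem stmt9 (ψ : Matrix (Fin 3) (Fin 3) ℂ → Matrix (Fin 3) (Fin 3) ℂ)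
    (hbij : Function.Bijective ψ)
    (hmul : ∀ A B, ψ (A * B * A) = ψ A * ψ B * ψ A)
    (hI : ψ 1 = 1) :
    ∀ P Q : Matrix (Fin 3) (Fin 3) ℂ, P ^ 2 = P → Q ^ 2 = Q →
      ((P * Q = P ∧ Q * P = P) ↔ (ψ P * ψ Q = ψ P ∧ ψ Q * ψ P = ψ P)) := by
  intro P Q hP hQ
  have hQQ : Q * Q = Q := by rw [← pow_two]; exact hQ
  have hψQ : ψ Q * ψ Q = ψ Q := by
    have h := hmul Q 1
    rw [hI, mul_one, hQQ] at h
    rw [mul_one] at h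
    exact h.symm
  constructor
  · rintro ⟨h1, h2⟩
    have hQPQ : Q * P * Q = P := by rw [h2, h1]
    have := hmul Q P
    rw [hQPQ] at this
    exact key9 hψQ this.symm
  · rintro ⟨h1, h2⟩
    have hqpq : ψ Q * ψ P * ψ Q = ψ P := by rw [h2, h1]
    have : ψ (Q * P * Q) = ψ P := by rw [hmul, hqpq]
    have hQPQ : Q * P * Q = P := hbij.injective this
    exact key9 hQQ hQPQ
end

section
/- Let φ : 𝒜 → ℬ be an additive bijection between standard operator algebras on complex Banach spaces satisfying φ(ABA) = φ(A)φ(B)φ(A) for all A, B ∈ 𝒜. Then φ is either a ring homomorphism, a ring antihomomorphism, the negative of a ring homomorphism, or the negative of a ring antihomomorphism. -/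
open Function

def IsPrimeRing (S : Type*) [Ring S] : Prop :=
  ∀ a b : S, (∀ x, a * x * b = 0) → a = 0 ∨ b = 0

theorem IsPrimeRing.eq_zero_or_eq_zero_of_anticomm {S : Type*} [Ring S] [IsAddTorsionFree S]
    (hS : IsPrimeRing S) {a b : S} (h : ∀ x, a * x * b = -(b * x * a)) : a = 0 ∨ b = 0 := by
  have h' : ∀ x, b * x * a = -(a * x * b) := fun x => by rw [h x, neg_neg]
  have hzero : ∀ x y, a * x * a * y * b = 0 := by
    intro x y
    refine self_eq_neg.mp ?_
    calc a * x * a * y * b = a * (x * a * y) * b := by noncomm_ring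
      _ = -(b * x * a * y * a) := by rw [h (x * a * y)]; noncomm_ring
      _ = a * x * (b * y * a) := by rw [h' x]; noncomm_ring
      _ = -(a * x * a * y * b) := by rw [h' y]; noncomm_ring
  by_cases hb : b = 0
  · exact Or.inr hb
  · exact Or.inl <| (hS a a fun x => (hS _ b (hzero x)).resolve_right hb).elim id id

theorem AddMonoidHom.eq_or_eq_of_forall_eq_or_eq {G M : Type*} [AddGroup G] [AddMonoid M]
    [IsLeftCancelAdd M] [IsRightCancelAdd M] (f g h : G →+ M) (hfgh : ∀ x, f x = g x ∨ f x = h x) :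
    f = g ∨ f = h := by
  by_contra! hne
  obtain ⟨x, hx⟩ := DFunLike.ne_iff.mp hne.1
  obtain ⟨y, hy⟩ := DFunLike.ne_iff.mp hne.2
  have hxh : f x = h x := (hfgh x).resolve_left hx
  have hyg : f y = g y := (hfgh y).resolve_right hy
  rcases hfgh (x + y) with hg | hh
  · rw [map_add, map_add, hyg] at hg
    exact hx (add_right_cancel hg)
  · rw [map_add, map_add, hxh] at hh
    exact hy (add_left_cancel hh)

def IsJordanTripleHom {R S : Type*} [Ring R] [Ring S] (ψ : R →+ S) : Prop :=
  ∀ a b, ψ (a * b * a) = ψ a * ψ b * ψ a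

namespace IsJordanTripleHom

variable {R S : Type*} [Ring R] [Ring S] {ψ : R →+ S}

theorem neg (hψ : IsJordanTripleHom ψ) : IsJordanTripleHom (-ψ) := fun a b => by
  simp only [AddMonoidHom.neg_apply, hψ a b]; noncomm_ring

theorem map_triple_add (hψ : IsJordanTripleHom ψ) (a b c : R) :
    ψ (a * b * c + c * b * a) = ψ a * ψ b * ψ c + ψ c * ψ b * ψ a := by
  have key := hψ (a + c) b
  rw [show (a + c) * b * (a + c) = a * b * a + (a * b * c + c * b * a) + c * b * c by noncomm_ring,
    map_add, map_add, hψ, hψ, map_add ψ a c] at key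
  calc ψ (a * b * c + c * b * a)
      = (ψ a + ψ c) * ψ b * (ψ a + ψ c) - ψ a * ψ b * ψ a - ψ c * ψ b * ψ c := by
        rw [← key]; abel
    _ = ψ a * ψ b * ψ c + ψ c * ψ b * ψ a := by noncomm_ring

theorem map_mul_add_map_mul (hψ : IsJordanTripleHom ψ) (hone : ψ 1 = 1) (a b : R) :
    ψ (a * b) + ψ (b * a) = ψ a * ψ b + ψ b * ψ a := by
  simpa only [mul_one, one_mul, hone, map_add] using hψ.map_triple_add a 1 b

theorem defect_mul_defect_anticomm (hψ : IsJordanTripleHom ψ) (hone : ψ 1 = 1) (a b x : R) :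
    (ψ (a * b) - ψ a * ψ b) * ψ x * (ψ (a * b) - ψ b * ψ a)
      = -((ψ (a * b) - ψ b * ψ a) * ψ x * (ψ (a * b) - ψ a * ψ b)) := by
  have hba : ψ (b * a) = ψ a * ψ b + ψ b * ψ a - ψ (a * b) := by
    rw [← hψ.map_mul_add_map_mul hone]; abel
  have hsum : ψ (a * b) * ψ x * ψ (b * a) + ψ (b * a) * ψ x * ψ (a * b)
      = ψ a * ψ b * ψ x * (ψ b * ψ a) + ψ b * ψ a * ψ x * (ψ a * ψ b) := by
    rw [← hψ.map_triple_add, show a * b * x * (b * a) + b * a * x * (a * b)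
      = a * (b * x * b) * a + b * (a * x * a) * b by noncomm_ring, map_add, hψ, hψ, hψ, hψ]
    noncomm_ring
  rw [hba] at hsum
  rw [← add_eq_zero_iff_eq_neg, ← sub_eq_zero.mpr hsum.symm]
  noncomm_ring

theorem map_mul_eq_or_eq_rev [IsAddTorsionFree S] (hψ : IsJordanTripleHom ψ) (hone : ψ 1 = 1)
    (hsurj : Surjective ψ) (hS : IsPrimeRing S) (a b : R) :
    ψ (a * b) = ψ a * ψ b ∨ ψ (a * b) = ψ b * ψ a := by
  have hanti : ∀ z, (ψ (a * b) - ψ a * ψ b) * z * (ψ (a * b) - ψ b * ψ a)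
      = -((ψ (a * b) - ψ b * ψ a) * z * (ψ (a * b) - ψ a * ψ b)) := fun z => by
    obtain ⟨x, rfl⟩ := hsurj z
    exact hψ.defect_mul_defect_anticomm hone a b x
  simpa only [sub_eq_zero] using hS.eq_zero_or_eq_zero_of_anticomm hanti

theorem map_mul_or_map_mul_rev [IsAddTorsionFree S] (hψ : IsJordanTripleHom ψ) (hone : ψ 1 = 1)
    (hsurj : Surjective ψ) (hS : IsPrimeRing S) :
    (∀ a b, ψ (a * b) = ψ a * ψ b) ∨ (∀ a b, ψ (a * b) = ψ b * ψ a) := by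
  let F : R →+ R →+ S := (AddMonoidHom.mul : R →+ R →+ R).compr₂ ψ
  let G : R →+ R →+ S := ((AddMonoidHom.mul : S →+ S →+ S).compl₂ ψ).comp ψ
  have hpointwise : ∀ a, F a = G a ∨ F a = G.flip a := fun a =>
    AddMonoidHom.eq_or_eq_of_forall_eq_or_eq _ _ _
      (hψ.map_mul_eq_or_eq_rev hone hsurj hS a)
  rcases AddMonoidHom.eq_or_eq_of_forall_eq_or_eq F G G.flip hpointwise with h | h
  · exact Or.inl fun a b => DFunLike.congr_fun (DFunLike.congr_fun h a) b
  · exact Or.inr fun a b => DFunLike.congr_fun (DFunLike.congr_fun h a) b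

theorem map_one_eq_one_or_neg_one (hψ : IsJordanTripleHom ψ) (hsurj : Surjective ψ)
    (hS : IsPrimeRing S) : ψ 1 = 1 ∨ ψ 1 = -1 := by
  set e := ψ 1
  have hconj : ∀ s, e * s * e = s := fun s => by
    obtain ⟨b, rfl⟩ := hsurj s
    simpa only [one_mul, mul_one] using (hψ 1 b).symm
  have hsq : e * e = 1 := by simpa only [mul_one] using hconj 1
  have hcomm : ∀ s, e * s = s * e := fun s => by
    calc e * s = e * s * (e * e) := by rw [hsq, mul_one]
      _ = s * e := by rw [← mul_assoc, hconj]
  have hzero : ∀ x, (e - 1) * x * (e + 1) = 0 := fun x => by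
    calc (e - 1) * x * (e + 1) = e * x * e + e * x - x * e - x := by noncomm_ring
      _ = 0 := by rw [hconj, hcomm]; abel
  rcases hS _ _ hzero with h | h
  · exact Or.inl (sub_eq_zero.mp h)
  · exact Or.inr (eq_neg_of_add_eq_zero_left h)

theorem map_mul_cases [IsAddTorsionFree S] (hψ : IsJordanTripleHom ψ) (hsurj : Surjective ψ)
    (hS : IsPrimeRing S) :
    (∀ a b, ψ (a * b) = ψ a * ψ b) ∨ (∀ a b, ψ (a * b) = ψ b * ψ a) ∨
    (∀ a b, ψ (a * b) = -(ψ a * ψ b)) ∨ (∀ a b, ψ (a * b) = -(ψ b * ψ a)) := by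
  rcases hψ.map_one_eq_one_or_neg_one hsurj hS with hone | hone
  · exact (hψ.map_mul_or_map_mul_rev hone hsurj hS).imp_right Or.inl
  · have hnsurj : Surjective (-ψ) := fun s => (hsurj (-s)).imp fun a ha => by simp [ha]
    have hnone : (-ψ) 1 = 1 := by simp [hone]
    refine Or.inr (Or.inr ?_)
    refine (hψ.neg.map_mul_or_map_mul_rev hnone hnsurj hS).imp (fun h a b => ?_) (fun h a b => ?_)
    all_goals
      have := h a b
      simp only [AddMonoidHom.neg_apply, neg_mul_neg] at this
      rw [← this, neg_neg]

end IsJordanTripleHom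

theorem IsStandardOpAlg.isPrimeRing {Y : Type*} [NormedAddCommGroup Y] [NormedSpace ℂ Y]
    {ℬ : Subalgebra ℂ (Y →L[ℂ] Y)} (hℬ : IsStandardOpAlg ℬ) : IsPrimeRing ℬ := by
  intro A B hAB
  by_contra! hne
  obtain ⟨y, hy⟩ := DFunLike.ne_iff.mp (Subtype.coe_ne_coe.mpr hne.1)
  obtain ⟨x, hx⟩ := DFunLike.ne_iff.mp (Subtype.coe_ne_coe.mpr hne.2)
  obtain ⟨g, -, hg⟩ := exists_dual_vector ℂ ((B : Y →L[ℂ] Y) x) (norm_ne_zero_iff.mpr hx)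
  have hgx : g ((B : Y →L[ℂ] Y) x) ≠ 0 := by
    rw [hg]; exact Complex.ofReal_ne_zero.mpr (norm_ne_zero_iff.mpr hx)
  have hT : g.smulRight y ∈ ℬ := hℬ _ <| by
    rw [ContinuousLinearMap.range_smulRight_apply (fun h => hgx (by simp [h]))]
    infer_instance
  have happ := DFunLike.congr_fun (congrArg Subtype.val (hAB ⟨_, hT⟩)) x
  simp only [Subalgebra.coe_mul, mul_apply_eq_comp, ContinuousLinearMap.smulRight_apply, map_smul,
    ZeroMemClass.coe_zero, zero_apply] at happ
  exact smul_ne_zero hgx hy happ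

theorem stmt12_general {X Y : Type*} [NormedAddCommGroup X] [NormedSpace ℂ X]
    [NormedAddCommGroup Y] [NormedSpace ℂ Y]
    (𝒜 : Subalgebra ℂ (X →L[ℂ] X)) (ℬ : Subalgebra ℂ (Y →L[ℂ] Y))
    (hℬ : IsStandardOpAlg ℬ)
    (φ : 𝒜 → ℬ) (hbij : Function.Bijective φ)
    (hadd : ∀ A B : 𝒜, φ (A + B) = φ A + φ B)
    (hmul : ∀ A B : 𝒜, φ (A * B * A) = φ A * φ B * φ A) :
    (∀ A B : 𝒜, φ (A * B) = φ A * φ B) ∨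
    (∀ A B : 𝒜, φ (A * B) = φ B * φ A) ∨
    (∀ A B : 𝒜, φ (A * B) = -(φ A * φ B)) ∨
    (∀ A B : 𝒜, φ (A * B) = -(φ B * φ A)) := by
  have : IsAddTorsionFree ℬ := .of_isTorsionFree ℂ ℬ
  exact IsJordanTripleHom.map_mul_cases (ψ := AddMonoidHom.mk' φ hadd) hmul hbij.2 hℬ.isPrimeRing

theorem stmt12 {X Y : Type*} [NormedAddCommGroup X] [NormedSpace ℂ X] [CompleteSpace X]
    [NormedAddCommGroup Y] [NormedSpace ℂ Y] [CompleteSpace Y]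
    (𝒜 : Subalgebra ℂ (X →L[ℂ] X)) (ℬ : Subalgebra ℂ (Y →L[ℂ] Y))
    (h𝒜 : IsStandardOpAlg 𝒜) (hℬ : IsStandardOpAlg ℬ)
    (φ : 𝒜 → ℬ) (hbij : Function.Bijective φ)
    (hadd : ∀ A B : 𝒜, φ (A + B) = φ A + φ B)
    (hmul : ∀ A B : 𝒜, φ (A * B * A) = φ A * φ B * φ A) :
    (∀ A B : 𝒜, φ (A * B) = φ A * φ B) ∨
    (∀ A B : 𝒜, φ (A * B) = φ B * φ A) ∨
    (∀ A B : 𝒜, φ (A * B) = -(φ A * φ B)) ∨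
    (∀ A B : 𝒜, φ (A * B) = -(φ B * φ A)) :=
  stmt12_general 𝒜 ℬ hℬ φ hbij hadd hmul
end
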